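/- For the parameter configuration r_1 = (1,0), r_2 = (cos(π/4), sin(π/4)), r_3 = (cos(π/4), −sin(π/4)) in ℝ² (d = 2), the C-cost C(A) = (3/(3·2·4))·Tr((AᵀA)⁻¹(1_2·1_2ᵀ + 2I)) equals 3/2, where A = (h(r_1), h(r_2), h(r_3))ᵀ with h(r) = (w², x², √2 wx) for r = (w,x). -/
import Mathlib


open Matrix Real

/-- `h : ℝ² → ℝ³`, `h(w, x) = (w², x², √2 w x)`. -/
noncomputable def h2 (r : Fin 2 → ℝ) : Fin 3 → ℝ :=
  ![r 0 ^ 2, r 1 ^ 2, Real.sqrt 2 * (r 0 * r 1)]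

/-- The original Rotosolve parameter configuration. -/
noncomputable def rOrig : Fin 3 → Fin 2 → ℝ :=
  ![![1, 0], ![Real.cos (π / 4), Real.sin (π / 4)], ![Real.cos (π / 4), -Real.sin (π / 4)]]

/-- For the original configuration `r₁ = (1,0)`, `r₂ = (cos(π/4), sin(π/4))`,
`r₃ = (cos(π/4), −sin(π/4))`, the C-cost equals `3/2`. -/
theorem stmt_13 :
    ((3 : ℝ) / (3 * 2 * 4)) *
      (((Matrix.of fun i => h2 (rOrig i))ᵀ * (Matrix.of fun i => h2 (rOrig i)))⁻¹ *
        (vecMulVec ![1, 1, 0] ![1, 1, 0] + (2 : ℝ) • (1 : Matrix (Fin 3) (Fin 3) ℝ))).trace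
      = 3 / 2 := by
  have h2' : Real.sqrt 2 * Real.sqrt 2 = 2 := Real.mul_self_sqrt (by norm_num)
  have h4 : Real.sqrt 2 * Real.sqrt 2 * (Real.sqrt 2 * Real.sqrt 2) = 4 := by rw [h2']; norm_num
  have hA : (Matrix.of fun i => h2 (rOrig i))ᵀ * (Matrix.of fun i => h2 (rOrig i))
      = !![3/2, 1/2, 0; 1/2, 1/2, 0; 0, 0, 1] := by
    ext i j
    fin_cases i <;> fin_cases j <;>
      simp [Matrix.mul_apply, Fin.sum_univ_three, h2, rOrig,
        Real.cos_pi_div_four, Real.sin_pi_div_four, Matrix.vecHead, Matrix.vecTail] <;>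
      nlinarith [h2', h4, Real.sqrt_nonneg 2]
  have hinv : (!![3/2, 1/2, 0; 1/2, 1/2, 0; 0, 0, 1] : Matrix (Fin 3) (Fin 3) ℝ)⁻¹
      = !![1, -1, 0; -1, 3, 0; 0, 0, 1] := by
    apply Matrix.inv_eq_left_inv
    ext i j
    fin_cases i <;> fin_cases j <;>
      simp [Matrix.mul_apply, Fin.sum_univ_three, Matrix.one_apply] <;> norm_num
  rw [hA, hinv]
  simp [Matrix.trace, Matrix.diag, Matrix.mul_apply, Fin.sum_univ_three, vecMulVec,
    Matrix.one_apply]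
  norm_num
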